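/- arXiv:2305.01931 — 2 statements merged into one kernel-verified Lean document; each statement's English description precedes it below -/
import Mathlib

section
/- For every weight μ in the weight lattice P̂ of R̂₀ and for any choice of parameter values t_α ∈ (−1,1) (α ∈ R₀, W₀-invariant), the function 𝒱_μ : V → ℝ is smooth, strictly convex and radially unbounded (𝒱_μ(ξ) → +∞ as ‖ξ‖ → ∞); consequently 𝒱_μ has a unique critical point, which is its unique global minimizer ξ_μ ∈ V, and ξ_μ is the unique solution of the critical equation cξ + ∑_{α∈R₀⁺} v_α(⟨ξ,α⟩)α̂ = 2π(ρ̂ + μ). -/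
noncomputable section

open scoped RealInnerProductSpace BigOperators Classical
open Filter

namespace AffinePieri

variable {V : Type*} [NormedAddCommGroup V] [InnerProductSpace ℝ V] [FiniteDimensional ℝ V]

/-- The coroot `α^∨ = 2α/⟨α,α⟩` of a vector `α`. -/
def coroot (α : V) : V := (2 / ⟪α, α⟫) • α

lemma refl_involutive (α : V) (k : ℝ) :
    Function.Involutive (fun x : V => x - (⟪x, coroot α⟫ + k) • α) := by
  intro x
  by_cases h : α = 0
  · simp [h, coroot]
  · have hαα : ⟪α, α⟫ ≠ 0 := fun hc => h (inner_self_eq_zero.mp hc)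
    have h2 : ⟪α, coroot α⟫ = 2 := by
      rw [coroot, real_inner_smul_right]
      field_simp
    show (x - (⟪x, coroot α⟫ + k) • α) -
        (⟪x - (⟪x, coroot α⟫ + k) • α, coroot α⟫ + k) • α = x
    rw [inner_sub_left, real_inner_smul_left, h2]
    have key : (⟪x, coroot α⟫ + k) +
        (⟪x, coroot α⟫ - (⟪x, coroot α⟫ + k) * 2 + k) = 0 := by ring
    rw [sub_sub, ← add_smul, key, zero_smul, sub_zero]

/-- The (affine) orthogonal reflection `x ↦ x - (⟨x,α^∨⟩ + k)α` as a permutation of `V`. -/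
def reflP (α : V) (k : ℝ) : Equiv.Perm V :=
  Function.Involutive.toPerm _ (refl_involutive α k)

@[simp] lemma reflP_apply (α : V) (k : ℝ) (x : V) :
    reflP α k x = x - (⟪x, coroot α⟫ + k) • α := rfl

/-- The sign of a real number, as an integer. -/
def zsgn (v : ℝ) : ℤ := if 0 < v then 1 else if v < 0 then -1 else 0

/-- Alternating composition `f ∘ g ∘ f ∘ ⋯` with `m` factors, used for braid relations. -/
def altOp {A : Type*} (f g : A → A) : ℕ → A → A
  | 0 => id
  | (k + 1) => f ∘ altOp g f k

/-- The interaction potential `v_α` entering the Morse (fusion) potential, for a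
parameter family `s`. -/
def vintOf (s : V → ℝ) (α : V) (x : ℝ) : ℝ :=
  (1 - s α ^ 2) * ∫ y in (0:ℝ)..x, 1 / (1 - 2 * s α * Real.cos y + s α ^ 2)

/-- All the standing data of the paper: an irreducible reduced crystallographic root
system `R₀` spanning the Euclidean space `V`, with a positive system, simple roots,
highest (short) roots, an admissible pair `(R₀, R̂₀)` encoded by the map `hat` and the
affine root `α₀`, a `W₀`-invariant multiplicity function `t` with values in `(-1,1)`,
and an integral level `c > 1`. -/
structure Setup (V : Type*) [NormedAddCommGroup V] [InnerProductSpace ℝ V]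
    [FiniteDimensional ℝ V] where
  n : ℕ
  npos : 0 < n
  hdim : Module.finrank ℝ V = n
  R0 : Finset V
  zero_not_mem : (0 : V) ∉ R0
  span_top : Submodule.span ℝ (R0 : Set V) = ⊤
  cryst : ∀ α ∈ R0, ∀ β ∈ R0, ∃ k : ℤ, ⟪β, coroot α⟫ = (k : ℝ)
  refl_mem : ∀ α ∈ R0, ∀ β ∈ R0, β - ⟪β, coroot α⟫ • α ∈ R0
  reduced : ∀ α ∈ R0, ∀ r : ℝ, r • α ∈ R0 → r = 1 ∨ r = -1
  irred : ¬ ∃ A B : Set V, A.Nonempty ∧ B.Nonempty ∧ A ∪ B = (R0 : Set V) ∧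
      ∀ α ∈ A, ∀ β ∈ B, ⟪α, β⟫ = 0
  Rpos : Finset V
  pos_subset : Rpos ⊆ R0
  pos_partition : ∀ α ∈ R0, (α ∈ Rpos ↔ -α ∉ Rpos)
  simple : Fin n → V
  simple_mem : ∀ j, simple j ∈ Rpos
  pos_decomp : ∀ α ∈ Rpos, ∃ f : Fin n → ℕ, α = ∑ j, (f j : ℝ) • simple j
  hroot : V
  hroot_mem : hroot ∈ Rpos
  hroot_highest : ∀ β ∈ R0, ∃ f : Fin n → ℕ, hroot - β = ∑ j, (f j : ℝ) • simple j
  hs : V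
  hs_mem : hs ∈ Rpos
  hs_short : ∀ α ∈ R0, ⟪hs, hs⟫ ≤ ⟪α, α⟫
  hs_highest : ∀ β ∈ R0, ⟪β, β⟫ = ⟪hs, hs⟫ →
      ∃ f : Fin n → ℕ, hs - β = ∑ j, (f j : ℝ) • simple j
  hat : V → V
  a0 : V
  admissible : ((∀ α : V, hat α = coroot α) ∧ a0 = -hs) ∨
      ((∀ α : V, hat α = (2 / ⟪hroot, hroot⟫) • α) ∧ a0 = -hroot)
  t : V → ℝ
  t_bound : ∀ α ∈ R0, |t α| < 1
  t_invariant : ∀ α ∈ R0, ∀ β ∈ R0, t (β - ⟪β, coroot α⟫ • α) = t β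
  c : ℤ
  c_gt : 1 < c

namespace Setup

variable (S : Setup V)

/-- `m_α = 2/⟨α, α̂⟩`. -/
def m (α : V) : ℝ := 2 / ⟪α, S.hat α⟫

/-- The finite Weyl group `W₀`, generated by the reflections in the roots. -/
def W0 : Subgroup (Equiv.Perm V) :=
  Subgroup.closure {w | ∃ α ∈ S.R0, w = reflP α 0}

/-- The affine Weyl group `W`, generated by the affine reflections
`s_a` for `a = α^∨ + m_α r c`. -/
def W : Subgroup (Equiv.Perm V) :=
  Subgroup.closure {w | ∃ α ∈ S.R0, ∃ r : ℤ, w = reflP α (S.m α * (r : ℝ) * (S.c : ℝ))}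

/-- The `W₀`-orbit of a vector. -/
def orb (ω : V) : Set V := {x | ∃ w ∈ S.W0, w ω = x}

/-- The weight lattice `P` of `R₀`. -/
def Plat : Set V := {x | ∀ α ∈ S.R0, ∃ k : ℤ, ⟪x, coroot α⟫ = (k : ℝ)}

/-- The root lattice `Q` of `R₀`. -/
def Qlat : Set V := (AddSubgroup.closure (S.R0 : Set V) : Set V)

/-- The semigroup `Q⁺` generated by the positive roots. -/
def Qplus : Set V := (AddSubmonoid.closure (S.Rpos : Set V) : Set V)

/-- The cone `P⁺` of dominant weights. -/
def Pplus : Set V := {x | x ∈ S.Plat ∧ ∀ α ∈ S.Rpos, 0 ≤ ⟪x, coroot α⟫}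

/-- The dominant affine alcove `A_c = {x | 0 ≤ ⟨x,β⟩ ≤ c ∀ β ∈ R̂₀⁺}`. -/
def Alc : Set V := {x | ∀ α ∈ S.Rpos, 0 ≤ ⟪x, S.hat α⟫ ∧ ⟪x, S.hat α⟫ ≤ (S.c : ℝ)}

/-- `P_c = P ∩ A_c`. -/
def Pc : Set V := {x | x ∈ S.Plat ∧ x ∈ S.Alc}

/-- The weight lattice `P̂` of `R̂₀`. -/
def Phat : Set V := {x | ∀ α ∈ S.R0, ∃ k : ℤ, ⟪x, coroot (S.hat α)⟫ = (k : ℝ)}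

/-- `P̂_c = {μ ∈ P̂ | 0 ≤ ⟨μ,α⟩ ≤ c ∀ α ∈ R₀⁺}`. -/
def Phatc : Set V :=
  {x | x ∈ S.Phat ∧ ∀ α ∈ S.Rpos, 0 ≤ ⟪x, α⟫ ∧ ⟪x, α⟫ ≤ (S.c : ℝ)}

/-- The half sum `ρ` of the positive roots of `R₀`. -/
def rho : V := (2⁻¹ : ℝ) • ∑ α ∈ S.Rpos, α

/-- The half sum `ρ̂` of the positive roots of `R̂₀`. -/
def rhoHat : V := (2⁻¹ : ℝ) • ∑ α ∈ S.Rpos, S.hat α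

/-- The coroot lattice `Q̂^∨` of `R̂₀`. -/
def Qhatvee : Set V :=
  (AddSubgroup.closure ((fun α => coroot (S.hat α)) '' (S.R0 : Set V)) : Set V)

/-- The gradient (direction) of the affine simple root `a_j`:
`α₀` for `j = 0` and `α_j` otherwise. -/
def alpha (j : Fin (S.n + 1)) : V :=
  if h : (j : ℕ) = 0 then S.a0 else S.simple ⟨(j : ℕ) - 1, by have := j.isLt; omega⟩

/-- The constant term of the affine simple root `a_j`. -/
def kconst (j : Fin (S.n + 1)) : ℝ := if (j : ℕ) = 0 then (S.c : ℝ) else 0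

/-- The affine simple root `a_j` as an affine function on `V`. -/
def aFun (j : Fin (S.n + 1)) (x : V) : ℝ := ⟪x, coroot (S.alpha j)⟫ + S.kconst j

/-- The simple affine reflections `s_0, s_1, …, s_n`. -/
def sgen (j : Fin (S.n + 1)) : Equiv.Perm V := reflP (S.alpha j) (S.kconst j)

/-- The length of an element of the affine Weyl group: the minimal length of an
expression as a product of the simple reflections. -/
def len (w : Equiv.Perm V) : ℕ :=
  sInf {k | ∃ l : List (Fin (S.n + 1)), l.length = k ∧ (l.map S.sgen).prod = w}

/-- The length of an element of the finite Weyl group w.r.t. the simple reflections. -/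
def len0 (w : Equiv.Perm V) : ℕ :=
  sInf {k | ∃ l : List (Fin S.n), l.length = k ∧
    (l.map fun j => reflP (S.simple j) 0).prod = w}

/-- `l` is a reduced expression for `w`. -/
def IsReducedWord (l : List (Fin (S.n + 1))) (w : Equiv.Perm V) : Prop :=
  (l.map S.sgen).prod = w ∧ l.length = S.len w

/-- The Bruhat partial order on the affine Weyl group. -/
def BruhatLE (v w : Equiv.Perm V) : Prop :=
  ∃ l : List (Fin (S.n + 1)), S.IsReducedWord l w ∧
    ∃ l' : List (Fin (S.n + 1)), l'.Sublist l ∧ (l'.map S.sgen).prod = v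

/-- Evaluation of a function on the weight lattice at a point of `V` (by `0` off `P`). -/
def ev (f : ↥S.Plat → ℂ) (x : V) : ℂ := if h : x ∈ S.Plat then f ⟨x, h⟩ else 0

/-- The integral part `J_j` of the integral-reflection operators. -/
def Jop (j : Fin (S.n + 1)) (f : ↥S.Plat → ℂ) (x : ↥S.Plat) : ℂ :=
  if 0 < Int.floor (S.aFun j x.1) then
    -∑ k ∈ Finset.Icc (1 : ℤ) (Int.floor (S.aFun j x.1)),
      S.ev f (x.1 - (k : ℝ) • S.alpha j)
  else if Int.floor (S.aFun j x.1) < 0 then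
    ∑ k ∈ Finset.Icc (0 : ℤ) (-(Int.floor (S.aFun j x.1)) - 1),
      S.ev f (x.1 + (k : ℝ) • S.alpha j)
  else 0

/-- The integral-reflection operators `T_j = t_j s_j + (t_j - 1) J_j` on `𝒞(P)`. -/
def Top (j : Fin (S.n + 1)) (f : ↥S.Plat → ℂ) (x : ↥S.Plat) : ℂ :=
  (S.t (S.alpha j) : ℂ) * S.ev f ((S.sgen j)⁻¹ x.1) +
    ((S.t (S.alpha j) : ℂ) - 1) * S.Jop j f x

/-- The operator `T_{j₁} ∘ ⋯ ∘ T_{j_ℓ}` attached to a word `l = [j₁, …, j_ℓ]`. -/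
def wordOp (l : List (Fin (S.n + 1))) : (↥S.Plat → ℂ) → (↥S.Plat → ℂ) :=
  l.foldr (fun j g => S.Top j ∘ g) id

/-- `TW` realizes `w ↦ T_w` (via reduced expressions). -/
def IsTW (TW : Equiv.Perm V → (↥S.Plat → ℂ) → (↥S.Plat → ℂ)) : Prop :=
  ∀ w l, S.IsReducedWord l w → TW w = S.wordOp l

/-- `tw` realizes the length multiplicative function `w ↦ t_w` (via reduced expressions). -/
def IsTmult (tw : Equiv.Perm V → ℂ) : Prop :=
  ∀ w l, S.IsReducedWord l w → tw w = (l.map fun j => (S.t (S.alpha j) : ℂ)).prod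

/-- `wmin` realizes `x ↦ w_x`, the unique shortest affine Weyl group element moving `x`
into the dominant alcove. -/
def IsShortest (wmin : V → Equiv.Perm V) : Prop :=
  ∀ x : V, wmin x ∈ S.W ∧ wmin x x ∈ S.Alc ∧
    ∀ w ∈ S.W, w x ∈ S.Alc →
      S.len (wmin x) ≤ S.len w ∧ (S.len w = S.len (wmin x) → w = wmin x)

/-- The positive affine roots, encoded as pairs `(α, r)` representing `α^∨ + m_α r c`. -/
def RplusP : Set (V × ℤ) :=
  {p | p.1 ∈ S.R0 ∧ (1 ≤ p.2 ∨ (p.2 = 0 ∧ p.1 ∈ S.Rpos))}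

/-- The value of the affine root encoded by `p = (α, r)` at a point of `V`. -/
def affval (p : V × ℤ) (x : V) : ℝ :=
  ⟪x, coroot p.1⟫ + S.m p.1 * (p.2 : ℝ) * (S.c : ℝ)

/-- `R[λ] = {a ∈ R⁺ | a(λ) < 0}`. -/
def Raff (lam : V) : Set (V × ℤ) := {p | p ∈ S.RplusP ∧ S.affval p lam < 0}

/-- `t[λ] = ∏_{a ∈ R[λ]} t_{a'}`. -/
def tBr (lam : V) : ℂ := ∏ᶠ p ∈ S.Raff lam, (S.t p.1 : ℂ)

/-- `θ(λ) = |{a ∈ R⁺ | a(λ) = -2}|`. -/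
def thetaCt (lam : V) : ℕ :=
  Set.ncard {p : V × ℤ | p ∈ S.RplusP ∧ S.affval p lam = -2}

/-- The affine intertwining operator `𝒥`, defined via `wmin` and `TW`. -/
def JJ (wmin : V → Equiv.Perm V) (TW : Equiv.Perm V → (↥S.Plat → ℂ) → (↥S.Plat → ℂ))
    (f : ↥S.Plat → ℂ) (x : ↥S.Plat) : ℂ :=
  (S.tBr x.1)⁻¹ * S.ev (TW (wmin x.1) f) (wmin x.1 x.1)

/-- The Morse (fusion-potential) function `𝒱_μ` for a parameter family `s`. -/
def MorseOf (s : V → ℝ) (μ ξ : V) : ℝ :=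
  ((S.c : ℝ) / 2) * ⟪ξ, ξ⟫ - 2 * Real.pi * ⟪S.rhoHat + μ, ξ⟫ +
    ∑ α ∈ S.Rpos, (2 / ⟪α, coroot (S.hat α)⟫) * ∫ x in (0:ℝ)..(⟪ξ, α⟫), vintOf s α x

/-- The Morse function `𝒱_μ` for the multiplicity function of the setup. -/
def Morse (μ ξ : V) : ℝ := S.MorseOf S.t μ ξ

/-- The critical equation `cξ + ∑_{α∈R₀⁺} v_α(⟨ξ,α⟩) α̂ = 2π(ρ̂ + μ)`. -/
def CritEq (μ x : V) : Prop :=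
  (S.c : ℝ) • x + ∑ α ∈ S.Rpos, (vintOf S.t α ⟪x, α⟫) • S.hat α =
    (2 * Real.pi) • (S.rhoHat + μ)

/-- Extension of a parameter vector indexed by `R₀` to a function on `V` (by zero). -/
def extParam (s : ↥S.R0 → ℝ) : V → ℝ := fun α => if h : α ∈ S.R0 then s ⟨α, h⟩ else 0

/-- `xi` realizes `μ ↦ ξ_μ`, the unique global minimizer of `𝒱_μ`. -/
def IsMinimizer (xi : V → V) : Prop :=
  ∀ μ ∈ S.Phat, ∀ x : V, x ≠ xi μ → S.Morse μ (xi μ) < S.Morse μ x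

/-- The `c`-function of the Macdonald spherical function. -/
def Cfun (ξ : V) : ℂ :=
  ∏ α ∈ S.Rpos, (1 - (S.t α : ℂ) * Complex.exp (-(Complex.I * (⟪ξ, α⟫ : ℂ)))) /
      (1 - Complex.exp (-(Complex.I * (⟪ξ, α⟫ : ℂ))))

/-- The Macdonald spherical function `M_λ(ξ)`. -/
def Msph (lam ξ : V) : ℂ :=
  ∑ᶠ w ∈ (S.W0 : Set (Equiv.Perm V)),
    S.Cfun (w ξ) * Complex.exp (Complex.I * (⟪w ξ, lam⟫ : ℂ))

/-- The orbit sum `m_ω(e^{iξ})`. -/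
def mSym (ω ξ : V) : ℂ := ∑ᶠ ν ∈ S.orb ω, Complex.exp (Complex.I * (⟪ν, ξ⟫ : ℂ))

/-- The plane wave `e^{iξ} ∈ 𝒞(P)`. -/
def planewave (ξ : V) : ↥S.Plat → ℂ :=
  fun lam => Complex.exp (Complex.I * (⟪lam.1, ξ⟫ : ℂ))

/-- The free operator `L_{ω;1}`. -/
def Lfree (ω : V) (f : ↥S.Plat → ℂ) (x : ↥S.Plat) : ℂ :=
  ∑ᶠ ν ∈ S.orb ω, S.ev f (x.1 + ν)

/-- `φ_ξ = ∑_{v ∈ W₀} T_v e^{iξ}`. -/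
def phiW (TW : Equiv.Perm V → (↥S.Plat → ℂ) → (↥S.Plat → ℂ)) (ξ : V) : ↥S.Plat → ℂ :=
  ∑ᶠ w ∈ (S.W0 : Set (Equiv.Perm V)), TW w (S.planewave ξ)

/-- The affine Macdonald spherical function `Φ_ξ = 𝒥 φ_ξ`. -/
def PhiA (wmin : V → Equiv.Perm V)
    (TW : Equiv.Perm V → (↥S.Plat → ℂ) → (↥S.Plat → ℂ)) (ξ : V) : ↥S.Plat → ℂ :=
  S.JJ wmin TW (S.phiW TW ξ)

/-- Invariance of a lattice function under the affine Weyl group. -/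
def Winv (f : ↥S.Plat → ℂ) : Prop :=
  ∀ w ∈ S.W, ∀ x : ↥S.Plat, S.ev f (w⁻¹ x.1) = f x

/-- A minuscule dominant weight. -/
def Minuscule (ω : V) : Prop := ω ∈ S.Pplus ∧ ∀ α ∈ S.Rpos, ⟪ω, coroot α⟫ ≤ 1

/-- `P_ϑ^⋆`: the orbit of the minuscule and quasi-minuscule weights. -/
def Pstar : Set V :=
  {x | ∃ w ∈ S.W0, ∃ η : V, (S.Minuscule η ∨ η = S.hs) ∧ x = w η}

/-- `ê_t(η) = ∏_{β∈R̂₀⁺} t_β^{⟨η,β^∨⟩/2}`. -/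
def et (η : V) : ℂ :=
  ∏ α ∈ S.Rpos, (S.t α : ℂ) ^ (((⟪η, coroot (S.hat α)⟫ / 2 : ℝ) : ℂ))

/-- `ĥ_t = t_{α₀} ê_t(-α₀^∨)`. -/
def hhat : ℂ := (S.t S.a0 : ℂ) * S.et (-(coroot S.a0))

/-- `e_t(ν) = ∏_{α∈R₀⁺} t_α^{⟨ν,α^∨⟩/2}`. -/
def elit (ν : V) : ℂ :=
  ∏ α ∈ S.Rpos, (S.t α : ℂ) ^ (((⟪ν, coroot α⟫ / 2 : ℝ) : ℂ))

/-- `h_t = t_ϑ e_t(-α₀)`. -/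
def hlit : ℂ := (S.t S.hs : ℂ) * S.elit (-S.a0)

/-- The coefficients `d_{λ,ν}`. -/
def dcoef (lam ν : V) : ℂ :=
  if ν ∈ S.orb S.hs then
    (S.thetaCt (lam + ν) : ℂ) * S.elit (-ν) * S.hlit ^ zsgn ⟪lam, S.hat ν⟫
  else 0

/-- The Pieri coefficients `V_{λ,ν}(t)`. -/
def Vcoef (lam ν : V) : ℂ :=
  (∏ α ∈ S.Rpos, if ⟪lam, S.hat α⟫ = 0 ∧ 0 < ⟪ν, S.hat α⟫ then
      (1 - (S.t α : ℂ) * S.et (S.hat α)) / (1 - S.et (S.hat α)) else 1) *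
  ∏ α ∈ S.Rpos, if ⟪lam, S.hat α⟫ = (S.c : ℝ) ∧ ⟪ν, S.hat α⟫ < 0 then
      (1 - (S.t α : ℂ) * S.hhat * S.et (-(S.hat α))) / (1 - S.hhat * S.et (-(S.hat α)))
    else 1

/-- The Pieri coefficients `U_{λ,ω}(t)`. -/
def Ucoef (wmin : V → Equiv.Perm V) (lam ω : V) : ℂ :=
  (∑ᶠ ν ∈ {ν | ν ∈ S.orb ω ∧ wmin (lam + ν) (lam + ν) = lam}, S.tBr (lam + ν)) +
    (1 - (S.t S.hs : ℂ)⁻¹) *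
      ∑ᶠ ν ∈ {ν | ν ∈ S.orb ω ∧ wmin (lam + ν) lam = lam}, S.dcoef lam ν

/-- The linear part of an affine transformation of `V`. -/
def linp (w : Equiv.Perm V) (x : V) : V := w x - w (0 : V)

/-- The set `[x] = {y | y₊ = x₊, w_y ≤ w_x}`. -/
def bra (wmin : V → Equiv.Perm V) (x : V) : Set V :=
  {y | wmin y y = wmin x x ∧ S.BruhatLE (wmin y) (wmin x)}

/-- The partial order `μ ⪯ λ`. -/
def preceq (wmin : V → Equiv.Perm V) (μ lam : V) : Prop :=
  lam - μ ∈ S.Qlat ∧ convexHull ℝ (S.bra wmin μ) ⊆ convexHull ℝ (S.bra wmin lam)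

/-- The Weyl denominator `δ(ξ)`. -/
def weylDenom (ξ : V) : ℂ :=
  ∏ α ∈ S.Rpos, (Complex.exp (Complex.I * (⟪ξ, α⟫ : ℂ) / 2) -
      Complex.exp (-(Complex.I * (⟪ξ, α⟫ : ℂ) / 2)))

/-- The Weyl character `χ_λ(ξ)`. -/
def chiW (lam ξ : V) : ℂ :=
  (S.weylDenom ξ)⁻¹ * ∑ᶠ w ∈ (S.W0 : Set (Equiv.Perm V)),
    ((-1 : ℂ) ^ S.len0 w) * Complex.exp (Complex.I * (⟪w ξ, lam + S.rho⟫ : ℂ))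

/-- The counting function `N_{λ,ω}`. -/
def Ncount (lam ω : V) : ℕ :=
  Nat.card {j : Fin (S.n + 1) // S.aFun j lam = 0 ∧ S.alpha j ∈ S.orb ω}

end Setup

/-! ### Auxiliary lemmas for Statement 0 -/

section Aux

open Filter

/-- A real function with everywhere-defined derivative equal to an analytic function is
analytic. -/
lemma analyticAt_of_hasDerivAt {f g : ℝ → ℝ} (hg : ∀ x, AnalyticAt ℝ g x)
    (hf : ∀ x, HasDerivAt f (g x) x) (x₀ : ℝ) : AnalyticAt ℝ f x₀ := by
  obtain ⟨p, hp⟩ := hg x₀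
  obtain ⟨R, hpR⟩ := hp
  obtain ⟨ρ, hρ0, hρR⟩ : ∃ ρ : NNReal, 0 < ρ ∧ (ρ : ENNReal) < R := by
    rcases ENNReal.lt_iff_exists_nnreal_btwn.mp hpR.r_pos with ⟨ρ, h1, h2⟩
    exact ⟨ρ, by exact_mod_cast h1, h2⟩
  obtain ⟨C, hC0, hC⟩ := p.norm_mul_pow_le_of_lt_radius (lt_of_lt_of_le hρR hpR.r_le)
  set a : ℕ → ℝ := fun n => p.coeff n with ha_def
  have ha : ∀ n, |a n| ≤ ‖p n‖ := by
    intro n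
    calc |a n| = ‖p n fun _ => (1 : ℝ)‖ := rfl
    _ ≤ ‖p n‖ * ∏ _i : Fin n, ‖(1 : ℝ)‖ := (p n).le_opNorm _
    _ = ‖p n‖ := by simp
  set δ : ℝ := (ρ : ℝ) / 2 with hδ_def
  have hρ0' : (0 : ℝ) < ρ := by exact_mod_cast hρ0
  have hδ : 0 < δ := by positivity
  set G : ℕ → ℝ → ℝ := fun n z => (a n / (n + 1)) * (z - x₀) ^ (n + 1) with hG_def
  set G' : ℕ → ℝ → ℝ := fun n z => a n * (z - x₀) ^ n with hG'_def
  have hGd : ∀ n y, HasDerivAt (G n) (G' n y) y := by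
    intro n y
    have h1 : HasDerivAt (fun z : ℝ => (z - x₀) ^ (n + 1)) (((n : ℝ) + 1) * (y - x₀) ^ n) y := by
      have h2 := (hasDerivAt_id y).sub_const x₀
      have h3 := hasDerivAt_pow (n + 1) (y - x₀)
      have h4 := h3.comp y h2
      simp at h4
      exact h4
    have h4 := h1.const_mul (a n / ((n : ℝ) + 1))
    have h5 : (n : ℝ) + 1 ≠ 0 := by positivity
    refine h4.congr_deriv ?_
    simp only [hG'_def]
    field_simp
  have hu : Summable (fun n : ℕ => C * (1 / 2 : ℝ) ^ n) := summable_geometric_two.mul_left C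
  have hbnd : ∀ n, |a n| * δ ^ n ≤ C * (1 / 2) ^ n := by
    intro n
    have h1 : δ ^ n = (ρ : ℝ) ^ n * (1 / 2) ^ n := by
      rw [hδ_def, div_eq_mul_one_div, mul_pow]
    have h2 : |a n| * (ρ : ℝ) ^ n ≤ C := le_trans (by gcongr; exact ha n) (hC n)
    calc |a n| * δ ^ n = (|a n| * (ρ : ℝ) ^ n) * (1 / 2) ^ n := by rw [h1]; ring
    _ ≤ C * (1 / 2) ^ n := by gcongr
  have hbound : ∀ n : ℕ, ∀ y ∈ Metric.ball x₀ δ, ‖G' n y‖ ≤ C * (1 / 2) ^ n := by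
    intro n y hy
    have hyd : |y - x₀| ≤ δ := le_of_lt (by simpa [Real.dist_eq] using hy)
    have h1 : ‖G' n y‖ = |a n| * |y - x₀| ^ n := by
      simp [hG'_def, Real.norm_eq_abs, abs_mul, abs_pow]
    rw [h1]
    calc |a n| * |y - x₀| ^ n ≤ |a n| * δ ^ n := by gcongr
    _ ≤ C * (1 / 2) ^ n := hbnd n
  have hsum0 : Summable fun n => G n x₀ := by
    have h0 : (fun n => G n x₀) = fun _ => (0 : ℝ) := by funext n; simp [hG_def]
    rw [h0]; exact summable_zero
  have hDeriv : ∀ y ∈ Metric.ball x₀ δ,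
      HasDerivAt (fun z => ∑' n, G n z) (∑' n, G' n y) y := fun y hy =>
    hasDerivAt_tsum_of_isPreconnected hu Metric.isOpen_ball
      (convex_ball x₀ δ).isPreconnected (fun n y _ => hGd n y) hbound
      (Metric.mem_ball_self hδ) hsum0 hy
  obtain ⟨ε, hε0, hball⟩ : ∃ ε > 0, ∀ z : ℝ, dist z x₀ < ε →
      HasSum (fun n => (z - x₀) ^ n • a n) (g z) := by
    have h5 := hasFPowerSeriesAt_iff'.mp (⟨R, hpR⟩ : HasFPowerSeriesAt g p x₀)
    rcases Metric.eventually_nhds_iff.mp h5 with ⟨ε, hε0, hε⟩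
    exact ⟨ε, hε0, fun z hz => hε hz⟩
  set δ' : ℝ := min δ ε with hδ'_def
  have hδ'0 : 0 < δ' := lt_min hδ hε0
  set h : ℝ → ℝ := fun z => ∑' n, G n z with hh_def
  have hx0 : h x₀ = 0 := by
    rw [hh_def]
    have h0 : (fun n => G n x₀) = fun _ => (0 : ℝ) := by funext n; simp [hG_def]
    simp [h0]
  have hkey : ∀ y ∈ Metric.ball x₀ δ', HasDerivAt h (g y) y := by
    intro y hy
    have hy1 : y ∈ Metric.ball x₀ δ := Metric.ball_subset_ball (min_le_left _ _) hy
    have hy2 : dist y x₀ < ε := lt_of_lt_of_le (Metric.mem_ball.mp hy) (min_le_right _ _)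
    have h6 := (hball y hy2).tsum_eq
    have h7 : (∑' n, G' n y) = g y := by
      rw [← h6]
      congr 1
      funext n
      simp [hG'_def, smul_eq_mul, mul_comm]
    have h8 := hDeriv y hy1
    rwa [h7] at h8
  have hconst : ∀ y ∈ Metric.ball x₀ δ', f y - h y = f x₀ - h x₀ := by
    intro y hy
    have hdiff : DifferentiableOn ℝ (fun z => f z - h z) (Metric.ball x₀ δ') := fun z hz =>
      ((hf z).sub (hkey z hz)).differentiableAt.differentiableWithinAt
    refine (convex_ball x₀ δ').is_const_of_fderivWithin_eq_zero hdiff ?_ hy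
      (Metric.mem_ball_self hδ'0)
    intro z hz
    have h8 : HasDerivAt (fun z => f z - h z) 0 z := by
      have h8' := (hf z).sub (hkey z hz)
      rw [sub_self] at h8'
      exact h8'
    have h9 : fderivWithin ℝ (fun z => f z - h z) (Metric.ball x₀ δ') z
        = fderiv ℝ (fun z => f z - h z) z := fderivWithin_of_isOpen Metric.isOpen_ball hz
    rw [h9, h8.hasFDerivAt.fderiv]
    ext w
    simp
  set b : ℕ → ℝ := fun n => match n with
    | 0 => f x₀
    | (k + 1) => a k / (k + 1)
  set q := FormalMultilinearSeries.ofScalars ℝ b with hq_def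
  have hqc : ∀ n, q.coeff n = b n := by
    intro n
    simp [hq_def, FormalMultilinearSeries.ofScalars, FormalMultilinearSeries.coeff,
      ContinuousMultilinearMap.mkPiAlgebraFin_apply, List.prod_ofFn]
  refine ⟨q, hasFPowerSeriesAt_iff'.mpr ?_⟩
  filter_upwards [Metric.ball_mem_nhds x₀ hδ'0] with z hz
  have hz1 : |z - x₀| ≤ δ := by
    have hzz := Metric.mem_ball.mp hz
    rw [Real.dist_eq] at hzz
    have hmin : δ' ≤ δ := min_le_left _ _
    linarith
  have hsummG : Summable fun n => G n z := by
    refine Summable.of_norm_bounded (hu.mul_right δ) ?_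
    intro n
    have h1 : ‖G n z‖ = (|a n| * |z - x₀| ^ n) * (|z - x₀| / (n + 1)) := by
      simp only [hG_def, Real.norm_eq_abs, abs_mul, abs_pow, abs_div]
      rw [abs_of_nonneg (by positivity : (0:ℝ) ≤ (n : ℝ) + 1)]
      rw [pow_succ]
      field_simp
    rw [h1]
    have h2 : |a n| * |z - x₀| ^ n ≤ C * (1 / 2) ^ n := by
      calc |a n| * |z - x₀| ^ n ≤ |a n| * δ ^ n := by gcongr
      _ ≤ C * (1 / 2) ^ n := hbnd n
    have h3 : |z - x₀| / ((n : ℝ) + 1) ≤ δ := by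
      have hn1 : (1 : ℝ) ≤ (n : ℝ) + 1 := by
        have := Nat.cast_nonneg (α := ℝ) n
        linarith
      calc |z - x₀| / ((n : ℝ) + 1) ≤ |z - x₀| := div_le_self (abs_nonneg _) hn1
      _ ≤ δ := hz1
    calc (|a n| * |z - x₀| ^ n) * (|z - x₀| / (n + 1))
        ≤ (C * (1 / 2) ^ n) * δ := by
          apply mul_le_mul h2 h3 (by positivity) (by positivity)
    _ = C * (1 / 2) ^ n * δ := rfl
  have hGz : HasSum (fun n => G n z) (h z) := hsummG.hasSum
  have h11 : HasSum (fun n => (z - x₀) ^ (n + 1) • q.coeff (n + 1)) (h z) := by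
    have h10 : (fun n => (z - x₀) ^ (n + 1) • q.coeff (n + 1)) = fun n => G n z := by
      funext n
      rw [hqc]
      simp only [hG_def, smul_eq_mul]
      ring
    rw [h10]; exact hGz
  have h12 := (hasSum_nat_add_iff (f := fun n => (z - x₀) ^ n • q.coeff n) 1).mp h11
  have h13 : f z = h z + f x₀ := by
    have h14 := hconst z hz
    rw [hx0] at h14
    linarith
  rw [h13]
  simpa [hqc] using h12

/-- `Real.cos` is real analytic. -/
lemma analyticAt_realCos (x : ℝ) : AnalyticAt ℝ Real.cos x := by
  have h : Real.cos = fun y : ℝ => Complex.reCLM (Complex.cos (Complex.ofRealCLM y)) := by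
    funext y
    simp [← Complex.ofReal_cos]
  rw [h]
  exact (Complex.reCLM.analyticAt _).comp
    (((Complex.differentiable_cos.analyticAt _).restrictScalars).comp
      (Complex.ofRealCLM.analyticAt _))

variable {t : ℝ}

lemma den_pos (ht : |t| < 1) (y : ℝ) : 0 < 1 - 2 * t * Real.cos y + t ^ 2 := by
  have h3 : t * Real.cos y ≤ |t| := by
    calc t * Real.cos y ≤ |t * Real.cos y| := le_abs_self _
    _ = |t| * |Real.cos y| := abs_mul _ _
    _ ≤ |t| * 1 := by
        have := Real.abs_cos_le_one y
        have := abs_nonneg t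
        nlinarith
    _ = |t| := mul_one _
  have h4 : 0 < (1 - |t|) ^ 2 := by
    have : 0 < 1 - |t| := by linarith
    positivity
  have h5 : |t| ^ 2 = t ^ 2 := sq_abs t
  nlinarith [h3, h4, h5]

lemma one_sub_sq_pos (ht : |t| < 1) : 0 < 1 - t ^ 2 := by
  obtain ⟨h1, h2⟩ := abs_lt.mp ht
  nlinarith

lemma analyticAt_den_inv (ht : |t| < 1) (y : ℝ) :
    AnalyticAt ℝ (fun y : ℝ => 1 / (1 - 2 * t * Real.cos y + t ^ 2)) y := by
  exact AnalyticAt.div analyticAt_const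
    ((analyticAt_const.sub (analyticAt_const.mul (analyticAt_realCos y))).add analyticAt_const)
    (ne_of_gt (den_pos ht y))

lemma continuous_den_inv (ht : |t| < 1) :
    Continuous (fun y : ℝ => 1 / (1 - 2 * t * Real.cos y + t ^ 2)) := by
  refine Continuous.div continuous_const
    ((continuous_const.sub (continuous_const.mul Real.continuous_cos)).add continuous_const)
    (fun y => ne_of_gt (den_pos ht y))

/-- One-variable version of the interaction potential. -/
noncomputable def vv (t : ℝ) (x : ℝ) : ℝ :=
  (1 - t ^ 2) * ∫ y in (0:ℝ)..x, 1 / (1 - 2 * t * Real.cos y + t ^ 2)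

/-- Second antiderivative. -/
noncomputable def FF (t : ℝ) (u : ℝ) : ℝ := ∫ x in (0:ℝ)..u, vv t x

lemma hasDerivAt_vv (ht : |t| < 1) (x : ℝ) :
    HasDerivAt (vv t) ((1 - t ^ 2) * (1 / (1 - 2 * t * Real.cos x + t ^ 2))) x :=
  (((continuous_den_inv ht).integral_hasStrictDerivAt 0 x).hasDerivAt).const_mul _

lemma continuous_vv (ht : |t| < 1) : Continuous (vv t) := by
  have h : Differentiable ℝ (vv t) := fun x => (hasDerivAt_vv ht x).differentiableAt
  exact h.continuous

lemma analyticAt_vv (ht : |t| < 1) (x : ℝ) : AnalyticAt ℝ (vv t) x :=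
  analyticAt_of_hasDerivAt
    (fun y => analyticAt_const.mul (analyticAt_den_inv ht y))
    (fun y => hasDerivAt_vv ht y) x

lemma vv_zero : vv t 0 = 0 := by simp [vv]

lemma strictMono_vv (ht : |t| < 1) : StrictMono (vv t) := by
  apply strictMono_of_deriv_pos
  intro x
  rw [(hasDerivAt_vv ht x).deriv]
  have h1 := one_sub_sq_pos ht
  have h2 := den_pos ht x
  positivity

lemma vv_nonneg (ht : |t| < 1) {x : ℝ} (hx : 0 ≤ x) : 0 ≤ vv t x := by
  have := (strictMono_vv ht).monotone hx
  rwa [vv_zero] at this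

lemma vv_nonpos (ht : |t| < 1) {x : ℝ} (hx : x ≤ 0) : vv t x ≤ 0 := by
  have := (strictMono_vv ht).monotone hx
  rwa [vv_zero] at this

lemma hasDerivAt_FF (ht : |t| < 1) (u : ℝ) : HasDerivAt (FF t) (vv t u) u :=
  ((continuous_vv ht).integral_hasStrictDerivAt 0 u).hasDerivAt

lemma analyticAt_FF (ht : |t| < 1) (u : ℝ) : AnalyticAt ℝ (FF t) u :=
  analyticAt_of_hasDerivAt (analyticAt_vv ht) (hasDerivAt_FF ht) u

lemma convexOn_FF (ht : |t| < 1) : ConvexOn ℝ Set.univ (FF t) := by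
  have hderiv : deriv (FF t) = vv t := funext fun u => (hasDerivAt_FF ht u).deriv
  refine (StrictMonoOn.strictConvexOn_of_deriv convex_univ ?_ ?_).convexOn
  · exact (Differentiable.continuous fun u => (hasDerivAt_FF ht u).differentiableAt).continuousOn
  · rw [hderiv, interior_univ]
    exact (strictMono_vv ht).strictMonoOn _

lemma FF_nonneg (ht : |t| < 1) (u : ℝ) : 0 ≤ FF t u := by
  rcases le_or_gt 0 u with hu | hu
  · exact intervalIntegral.integral_nonneg hu fun x hx => vv_nonneg ht hx.1
  · have h2 : 0 ≤ ∫ x in u..(0:ℝ), -vv t x :=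
      intervalIntegral.integral_nonneg hu.le fun x hx => neg_nonneg.mpr (vv_nonpos ht hx.2)
    rw [intervalIntegral.integral_neg] at h2
    have h3 : FF t u = -∫ x in u..(0:ℝ), vv t x := by
      rw [FF, intervalIntegral.integral_symm]
    rw [h3]
    linarith

lemma vintOf_eq_vv (s : V → ℝ) (α : V) : vintOf s α = vv (s α) := rfl

/-- Structure of the coefficients `2/⟨α, α̂^∨⟩` and the relation `(2/⟨α,α̂^∨⟩)α = α̂`. -/
lemma Setup.hat_spec (S : Setup V) {α : V} (hα : α ∈ S.R0) :
    0 < ⟪α, coroot (S.hat α)⟫ ∧ (2 / ⟪α, coroot (S.hat α)⟫) • α = S.hat α := by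
  have hα0 : α ≠ 0 := fun h => S.zero_not_mem (h ▸ hα)
  have hA : 0 < ⟪α, α⟫ := by
    rw [real_inner_self_eq_norm_sq]
    have : ‖α‖ ≠ 0 := norm_ne_zero_iff.mpr hα0
    positivity
  have key : ∀ B : ℝ, 0 < B → S.hat α = (2 / B) • α →
      0 < ⟪α, coroot (S.hat α)⟫ ∧ (2 / ⟪α, coroot (S.hat α)⟫) • α = S.hat α := by
    intro B hB hhat
    have h1 : ⟪S.hat α, S.hat α⟫ = (2 / B) ^ 2 * ⟪α, α⟫ := by
      rw [hhat, real_inner_smul_left, real_inner_smul_right]; ring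
    have h2 : coroot (S.hat α) = (B / ⟪α, α⟫) • α := by
      rw [coroot, h1, hhat, smul_smul]
      congr 1
      field_simp
    have h3 : ⟪α, coroot (S.hat α)⟫ = B := by
      rw [h2, real_inner_smul_right]
      field_simp
    refine ⟨by rw [h3]; exact hB, by rw [h3, hhat]⟩
  rcases S.admissible with ⟨hhat, _⟩ | ⟨hhat, _⟩
  · exact key ⟪α, α⟫ hA (by rw [hhat α]; rfl)
  · have hφ0 : S.hroot ≠ 0 := fun h => S.zero_not_mem (h ▸ S.pos_subset S.hroot_mem)
    have hB : 0 < ⟪S.hroot, S.hroot⟫ := by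
      rw [real_inner_self_eq_norm_sq]
      have : ‖S.hroot‖ ≠ 0 := norm_ne_zero_iff.mpr hφ0
      positivity
    exact key _ hB (by rw [hhat α])

end Aux



set_option maxHeartbeats 2000000 in
/-- smoothness, strict convexity and radial unboundedness of the Morse
function `𝒱_μ`; existence of a unique critical point = unique global minimizer `ξ_μ`,
which is the unique solution of the critical equation. -/
theorem statement0 (S : Setup V) (μ : V) (hμ : μ ∈ S.Phat) :
    ContDiff ℝ (⊤ : ℕ∞) (S.Morse μ) ∧
    StrictConvexOn ℝ Set.univ (S.Morse μ) ∧
    Filter.Tendsto (S.Morse μ) (Bornology.cobounded V) Filter.atTop ∧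
    ∃ ξ : V, (∀ x : V, x ≠ ξ → S.Morse μ ξ < S.Morse μ x) ∧
      (∀ x : V, fderiv ℝ (S.Morse μ) x = 0 ↔ x = ξ) ∧
      (∀ x : V, S.CritEq μ x ↔ x = ξ) := by
  classical
  set w : V := S.rhoHat + μ with hw_def
  have hcpos : (0 : ℝ) < (S.c : ℝ) := by
    have h := S.c_gt
    exact_mod_cast lt_trans zero_lt_one h
  have hmem : ∀ α ∈ S.Rpos, α ∈ S.R0 := fun α h => S.pos_subset h
  have htb : ∀ α ∈ S.Rpos, |S.t α| < 1 := fun α h => S.t_bound α (hmem α h)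
  have hkpos : ∀ α ∈ S.Rpos, 0 < ⟪α, coroot (S.hat α)⟫ :=
    fun α h => (S.hat_spec (hmem α h)).1
  have hksmul : ∀ α ∈ S.Rpos, (2 / ⟪α, coroot (S.hat α)⟫) • α = S.hat α :=
    fun α h => (S.hat_spec (hmem α h)).2
  have hM : ∀ ξ : V, S.Morse μ ξ = ((S.c : ℝ) / 2) * ⟪ξ, ξ⟫ - 2 * Real.pi * ⟪w, ξ⟫ +
      ∑ α ∈ S.Rpos, (2 / ⟪α, coroot (S.hat α)⟫) * FF (S.t α) ⟪ξ, α⟫ := fun _ => rfl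
  have hMfun : S.Morse μ = fun ξ : V => ((S.c : ℝ) / 2) * ⟪ξ, ξ⟫ - 2 * Real.pi * ⟪w, ξ⟫ +
      ∑ α ∈ S.Rpos, (2 / ⟪α, coroot (S.hat α)⟫) * FF (S.t α) ⟪ξ, α⟫ := rfl
  -- Smoothness
  have hsmooth : ContDiff ℝ (⊤ : ℕ∞) (S.Morse μ) := by
    rw [hMfun]
    apply ContDiff.add
    · apply ContDiff.sub
      · exact contDiff_const.mul (contDiff_inner.comp (contDiff_id.prodMk contDiff_id))
      · exact contDiff_const.mul (contDiff_inner.comp (contDiff_const.prodMk contDiff_id))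
    · apply ContDiff.sum
      intro α hα
      have hFF : ContDiff ℝ (⊤ : ℕ∞) (FF (S.t α)) :=
        contDiff_iff_contDiffAt.mpr fun u => (analyticAt_FF (htb α hα) u).contDiffAt
      have hlin : ContDiff ℝ (⊤ : ℕ∞) (fun ξ : V => ⟪ξ, α⟫) :=
        contDiff_inner.comp (contDiff_id.prodMk contDiff_const)
      exact contDiff_const.mul (hFF.comp hlin)
  -- Strict convexity
  have hsconv : StrictConvexOn ℝ Set.univ (S.Morse μ) := by
    rw [hMfun]
    have h12 : StrictConvexOn ℝ Set.univ
        (fun ξ : V => ((S.c : ℝ) / 2) * ⟪ξ, ξ⟫ - 2 * Real.pi * ⟪w, ξ⟫) := by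
      refine ⟨convex_univ, ?_⟩
      intro x _ y _ hxy a b ha hb hab
      have hb' : b = 1 - a := by linarith
      subst hb'
      have h1 : ⟪a • x + (1 - a) • y, a • x + (1 - a) • y⟫ =
          a * a * ⟪x, x⟫ + 2 * (a * (1 - a) * ⟪x, y⟫) + (1 - a) * (1 - a) * ⟪y, y⟫ := by
        simp only [real_inner_add_add_self, real_inner_smul_left, real_inner_smul_right]
        ring
      have h2 : ⟪w, a • x + (1 - a) • y⟫ = a * ⟪w, x⟫ + (1 - a) * ⟪w, y⟫ := by
        simp [inner_add_right, real_inner_smul_right]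
      have h3 : 0 < ⟪x - y, x - y⟫ := by
        have hne : x - y ≠ 0 := sub_ne_zero.mpr hxy
        rw [real_inner_self_eq_norm_sq]
        have hnn : ‖x - y‖ ≠ 0 := norm_ne_zero_iff.mpr hne
        positivity
      have h4 := real_inner_sub_sub_self x y
      have h5 : 0 < a * (1 - a) := mul_pos ha hb
      simp only [smul_eq_mul]
      rw [h1, h2]
      nlinarith [mul_pos hcpos (mul_pos h5 h3), h4]
    have hterm : ∀ α ∈ S.Rpos, ConvexOn ℝ Set.univ
        (fun ξ : V => (2 / ⟪α, coroot (S.hat α)⟫) * FF (S.t α) ⟪ξ, α⟫) := by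
      intro α hα
      have hk : 0 ≤ 2 / ⟪α, coroot (S.hat α)⟫ :=
        div_nonneg (by norm_num) (hkpos α hα).le
      refine ⟨convex_univ, ?_⟩
      intro x _ y _ a b ha hb hab
      have hlin : ⟪a • x + b • y, α⟫ = a * ⟪x, α⟫ + b * ⟪y, α⟫ := by
        simp [inner_add_left, real_inner_smul_left]
      have hFc := (convexOn_FF (htb α hα)).2 (Set.mem_univ ⟪x, α⟫) (Set.mem_univ ⟪y, α⟫)
        ha hb hab
      simp only [smul_eq_mul] at hFc ⊢
      rw [hlin]
      nlinarith [mul_le_mul_of_nonneg_left hFc hk]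
    have h3conv : ConvexOn ℝ Set.univ
        (fun ξ : V => ∑ α ∈ S.Rpos, (2 / ⟪α, coroot (S.hat α)⟫) * FF (S.t α) ⟪ξ, α⟫) := by
      have main : ∀ s : Finset V, (∀ α ∈ s, α ∈ S.Rpos) → ConvexOn ℝ Set.univ
          (fun ξ : V => ∑ α ∈ s, (2 / ⟪α, coroot (S.hat α)⟫) * FF (S.t α) ⟪ξ, α⟫) := by
        intro s
        induction s using Finset.induction_on with
        | empty => intro _; simpa using convexOn_const (0 : ℝ) convex_univ
        | @insert a s hna ih =>
          intro hs
          have h1 := hterm a (hs a (Finset.mem_insert_self a s))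
          have h2 := ih fun α hα => hs α (Finset.mem_insert_of_mem hα)
          simp only [Finset.sum_insert hna]
          exact h1.add h2
      exact main S.Rpos fun _ h => h
    exact h12.add_convexOn h3conv
  -- Coercivity
  have hlow : ∀ ξ : V,
      ((S.c : ℝ) / 2) * ‖ξ‖ ^ 2 - 2 * Real.pi * ‖w‖ * ‖ξ‖ ≤ S.Morse μ ξ := by
    intro ξ
    rw [hM ξ]
    have h1 : ⟪ξ, ξ⟫ = ‖ξ‖ ^ 2 := real_inner_self_eq_norm_sq ξ
    have h2 : ⟪w, ξ⟫ ≤ ‖w‖ * ‖ξ‖ := real_inner_le_norm w ξ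
    have h3 : 0 ≤ ∑ α ∈ S.Rpos, (2 / ⟪α, coroot (S.hat α)⟫) * FF (S.t α) ⟪ξ, α⟫ :=
      Finset.sum_nonneg fun α hα =>
        mul_nonneg (div_nonneg (by norm_num) (hkpos α hα).le) (FF_nonneg (htb α hα) _)
    have h4 := mul_le_mul_of_nonneg_left h2
      (le_of_lt (by positivity : (0 : ℝ) < 2 * Real.pi))
    rw [h1]
    nlinarith [h3, h4]
  have hcoer : Filter.Tendsto (S.Morse μ) (Bornology.cobounded V) Filter.atTop := by
    have hφ : Filter.Tendsto
        (fun r : ℝ => ((S.c : ℝ) / 2) * r ^ 2 - 2 * Real.pi * ‖w‖ * r)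
        Filter.atTop Filter.atTop := by
      have h2 : Filter.Tendsto (fun r : ℝ => ((S.c : ℝ) / 2) * r - 2 * Real.pi * ‖w‖)
          Filter.atTop Filter.atTop := by
        have h2a := Filter.tendsto_atTop_add_const_right Filter.atTop
          (-(2 * Real.pi * ‖w‖))
          (Filter.Tendsto.const_mul_atTop (show (0:ℝ) < (S.c : ℝ) / 2 by positivity)
            Filter.tendsto_id)
        simpa [sub_eq_add_neg] using h2a
      have h3 := Filter.Tendsto.atTop_mul_atTop₀ Filter.tendsto_id h2
      exact h3.congr fun r => by simp only [id_eq]; ring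
    have hn := hφ.comp (tendsto_norm_cobounded_atTop (E := V))
    exact Filter.tendsto_atTop_mono hlow hn
  -- Existence of minimizer
  obtain ⟨ξ, hξmin⟩ : ∃ ξ : V, ∀ y : V, S.Morse μ ξ ≤ S.Morse μ y := by
    have hev : ∀ᶠ x in Filter.cocompact V, S.Morse μ 0 ≤ S.Morse μ x := by
      have h := hcoer.eventually_ge_atTop (S.Morse μ 0)
      rwa [Metric.cobounded_eq_cocompact] at h
    exact hsmooth.continuous.exists_forall_le' 0 hev
  have hstrict : ∀ x : V, x ≠ ξ → S.Morse μ ξ < S.Morse μ x := by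
    intro x hx
    by_contra hle
    push_neg at hle
    have heq : S.Morse μ x = S.Morse μ ξ := le_antisymm hle (hξmin x)
    have hmid := hsconv.2 (Set.mem_univ x) (Set.mem_univ ξ) hx
      (by norm_num : (0:ℝ) < 1/2) (by norm_num : (0:ℝ) < 1/2) (by norm_num)
    have hm2 := hξmin ((1/2 : ℝ) • x + (1/2 : ℝ) • ξ)
    rw [heq] at hmid
    simp only [smul_eq_mul] at hmid
    linarith
  -- The gradient field
  set gr : V → V := fun x => (S.c : ℝ) • x +
      ∑ α ∈ S.Rpos, (vintOf S.t α ⟪x, α⟫) • S.hat α - (2 * Real.pi) • w with hgr_def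
  have hfd : ∀ x : V, HasFDerivAt (S.Morse μ) (innerSL ℝ (gr x)) x := by
    intro x
    have hq1 : HasFDerivAt (fun ξ : V => ((S.c : ℝ) / 2) * ⟪ξ, ξ⟫)
        (innerSL ℝ ((S.c : ℝ) • x)) x := by
      have hi := (hasFDerivAt_id x).inner ℝ (hasFDerivAt_id x)
      have hq1' := hi.const_mul ((S.c : ℝ) / 2)
      refine hq1'.congr_fderiv ?_
      ext y
      simp [fderivInnerCLM, real_inner_smul_left, real_inner_comm]
      ring
    have hq2 : HasFDerivAt (fun ξ : V => 2 * Real.pi * ⟪w, ξ⟫)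
        (innerSL ℝ ((2 * Real.pi) • w)) x := by
      have h := (innerSL ℝ ((2 * Real.pi) • w)).hasFDerivAt (x := x)
      exact h.congr_of_eventuallyEq (Filter.Eventually.of_forall fun ξ => by
        simp [real_inner_smul_left])
    have hterm : ∀ α ∈ S.Rpos, HasFDerivAt
        (fun ξ : V => (2 / ⟪α, coroot (S.hat α)⟫) * FF (S.t α) ⟪ξ, α⟫)
        (innerSL ℝ ((vintOf S.t α ⟪x, α⟫) • S.hat α)) x := by
      intro α hα
      have hl : HasFDerivAt (fun ξ : V => ⟪ξ, α⟫) (innerSL ℝ α) x := by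
        have h := (innerSL ℝ α).hasFDerivAt (x := x)
        exact h.congr_of_eventuallyEq (Filter.Eventually.of_forall fun ξ => by
          simp only [innerSL_apply_apply]
          exact real_inner_comm α ξ)
      have hFd : HasDerivAt (FF (S.t α)) (vv (S.t α) ⟪x, α⟫) ⟪x, α⟫ :=
        hasDerivAt_FF (htb α hα) _
      have hcomp := hFd.comp_hasFDerivAt x hl
      have hmul := hcomp.const_mul (2 / ⟪α, coroot (S.hat α)⟫)
      refine hmul.congr_fderiv ?_
      ext y
      have hhk := hksmul α hα
      have h5 : ⟪S.hat α, y⟫ = (2 / ⟪α, coroot (S.hat α)⟫) * ⟪α, y⟫ := by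
        conv_lhs => rw [← hhk]
        exact real_inner_smul_left _ _ _
      simp only [innerSL_apply_apply, ContinuousLinearMap.smul_apply, smul_eq_mul,
        real_inner_smul_left]
      rw [h5, vintOf_eq_vv]
      ring
    have hsum := HasFDerivAt.sum (fun α (hα : α ∈ S.Rpos) => hterm α hα) (x := x)
    have hall := (hq1.sub hq2).add hsum
    rw [hMfun]
    refine (hall.congr_of_eventuallyEq (Filter.Eventually.of_forall fun ξ => by
      simp [Finset.sum_apply])).congr_fderiv ?_
    rw [hgr_def]
    simp only [map_sub, map_add, map_sum]
    abel
  have hfderiv : ∀ x : V, fderiv ℝ (S.Morse μ) x = innerSL ℝ (gr x) :=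
    fun x => (hfd x).fderiv
  have hzero : ∀ x : V, fderiv ℝ (S.Morse μ) x = 0 ↔ gr x = 0 := by
    intro x
    rw [hfderiv x]
    constructor
    · intro h
      have h2 := ContinuousLinearMap.ext_iff.mp h (gr x)
      simp only [ContinuousLinearMap.zero_apply, innerSL_apply_apply] at h2
      exact inner_self_eq_zero.mp h2
    · intro h
      rw [h]
      ext y
      simp
  have hcrit : ∀ x : V, fderiv ℝ (S.Morse μ) x = 0 ↔ x = ξ := by
    intro x
    constructor
    · intro h0
      by_contra hne
      have hlt : S.Morse μ ξ < S.Morse μ x := hstrict x hne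
      set φ : ℝ → ℝ := fun s => S.Morse μ (x + s • (ξ - x)) with hφ_def
      have hpath : HasDerivAt (fun s : ℝ => x + s • (ξ - x)) (ξ - x) 0 := by
        simpa using ((hasDerivAt_id (0 : ℝ)).smul_const (ξ - x)).const_add x
      have hφ0 : HasDerivAt φ 0 0 := by
        have hfd' : HasFDerivAt (S.Morse μ) (innerSL ℝ (gr x))
            ((fun s : ℝ => x + s • (ξ - x)) 0) := by
          simpa using hfd x
        have h2 := hfd'.comp_hasDerivAt 0 hpath
        have h3 : (innerSL ℝ (gr x)) (ξ - x) = 0 := by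
          have h4 : innerSL ℝ (gr x) = 0 := by rw [← hfderiv x]; exact h0
          rw [h4]; simp
        rw [h3] at h2
        exact h2
      have hub : ∀ s ∈ Set.Ioc (0 : ℝ) 1, slope φ 0 s ≤ S.Morse μ ξ - S.Morse μ x := by
        intro s hs
        have hs0 : 0 < s := hs.1
        have hs1 : s ≤ 1 := hs.2
        have hpt : x + s • (ξ - x) = (1 - s) • x + s • ξ := by
          rw [smul_sub, sub_smul, one_smul]
          abel
        have hcv := hsconv.convexOn.2 (Set.mem_univ x) (Set.mem_univ ξ)
          (by linarith : (0 : ℝ) ≤ 1 - s) hs0.le (by ring)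
        simp only [smul_eq_mul] at hcv
        have hφs : φ s ≤ S.Morse μ x + s * (S.Morse μ ξ - S.Morse μ x) := by
          rw [hφ_def]
          simp only
          rw [hpt]
          nlinarith [hcv]
        have hφzero : φ 0 = S.Morse μ x := by simp [hφ_def]
        rw [slope_def_field]
        rw [sub_zero, div_le_iff₀ hs0, hφzero]
        nlinarith [hφs]
      have htends : Filter.Tendsto (slope φ 0) (nhdsWithin 0 (Set.Ioi 0)) (nhds 0) :=
        (hasDerivAt_iff_tendsto_slope.mp hφ0).mono_left
          (nhdsWithin_mono 0 fun s hs => ne_of_gt hs)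
      have hle := le_of_tendsto htends
        (Filter.eventually_of_mem (Ioc_mem_nhdsGT_of_mem ⟨le_refl 0, one_pos⟩) hub)
      linarith
    · intro h
      subst h
      have hloc : IsLocalMin (S.Morse μ) x :=
        Filter.Eventually.of_forall fun y => hξmin y
      exact hloc.fderiv_eq_zero
  refine ⟨hsmooth, hsconv, hcoer, ξ, hstrict, hcrit, ?_⟩
  intro x
  rw [← hcrit x, hzero x]
  have hiff : gr x = 0 ↔ S.CritEq μ x := by
    rw [hgr_def, hw_def, sub_eq_zero]
    exact Iff.rfl
  rw [hiff]


end AffinePieri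
end
end

section
/- When t_α = 0 for all α ∈ R₀, the unique global minimizer of the function 𝒱_μ equals ξ_μ(0) = (2π/(h + c))(ρ̂ + μ) for every μ ∈ P̂, where ρ = ½∑_{α∈R₀⁺}α and h = 1 − ⟨ρ, α₀^∨⟩. -/
noncomputable section

open scoped RealInnerProductSpace BigOperators Classical
open Filter

namespace AffinePieri

variable {V : Type*} [NormedAddCommGroup V] [InnerProductSpace ℝ V] [FiniteDimensional ℝ V]

section Statement1Aux

variable {V : Type*} [NormedAddCommGroup V] [InnerProductSpace ℝ V] [FiniteDimensional ℝ V]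

lemma aux_inner_coroot (x α : V) : ⟪x, coroot α⟫ = 2 / ⟪α, α⟫ * ⟪x, α⟫ := by
  simp [coroot, real_inner_smul_right]

lemma aux_coroot_neg (α : V) : coroot (-α) = -coroot α := by
  simp [coroot]

variable (S : Setup V)

lemma aux_root_ne_zero {α : V} (h : α ∈ S.R0) : α ≠ 0 :=
  fun e => S.zero_not_mem (e ▸ h)

lemma aux_inner_self_pos {α : V} (h : α ∈ S.R0) : 0 < ⟪α, α⟫ := by
  rcases lt_or_eq_of_le (real_inner_self_nonneg (x := α)) with h1 | h1
  · exact h1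
  · exact absurd (inner_self_eq_zero.mp h1.symm) (aux_root_ne_zero S h)

lemma aux_neg_mem {α : V} (h : α ∈ S.R0) : -α ∈ S.R0 := by
  have hq : ⟪α, α⟫ ≠ 0 := ne_of_gt (aux_inner_self_pos S h)
  have h2 : ⟪α, coroot α⟫ = 2 := by rw [aux_inner_coroot]; field_simp
  have h3 := S.refl_mem α h α h
  rw [h2, show α - (2:ℝ) • α = -α by rw [two_smul]; abel] at h3
  exact h3

lemma aux_neg_pos {α : V} (h : α ∈ S.R0) (hp : α ∉ S.Rpos) : -α ∈ S.Rpos := by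
  by_contra hn
  exact hp ((S.pos_partition α h).mpr hn)

lemma aux_span_simple : ⊤ ≤ Submodule.span ℝ (Set.range S.simple) := by
  rw [← S.span_top]
  refine Submodule.span_le.mpr ?_
  have hmem : ∀ γ ∈ S.Rpos, γ ∈ Submodule.span ℝ (Set.range S.simple) := by
    intro γ hγ
    obtain ⟨f, hf⟩ := S.pos_decomp γ hγ
    rw [hf]
    exact Submodule.sum_mem _ fun j _ =>
      Submodule.smul_mem _ _ (Submodule.subset_span ⟨j, rfl⟩)
  intro α hα
  rw [Finset.mem_coe] at hα
  by_cases hp : α ∈ S.Rpos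
  · exact hmem α hp
  · have := Submodule.neg_mem _ (hmem _ (aux_neg_pos S hα hp))
    simpa using this

lemma aux_li : LinearIndependent ℝ S.simple :=
  linearIndependent_of_top_le_span_of_card_eq_finrank (aux_span_simple S)
    (by simpa using S.hdim.symm)

lemma aux_coeff {k : ℝ} (hk : k < 0) (g f : Fin S.n → ℕ)
    (h : k • ∑ j, (g j : ℝ) • S.simple j = ∑ j, (f j : ℝ) • S.simple j) :
    ∀ j, (g j : ℝ) = 0 := by
  intro j
  have h0 : ∑ i, (k * (g i : ℝ) - (f i : ℝ)) • S.simple i = 0 := by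
    have h1 : ∑ i, (k * (g i : ℝ)) • S.simple i = ∑ i, (f i : ℝ) • S.simple i := by
      rw [← h, Finset.smul_sum]
      simp [smul_smul]
    simp [sub_smul, Finset.sum_sub_distrib, h1]
  have hz := Fintype.linearIndependent_iff.mp (aux_li S) _ h0 j
  have hf : (0:ℝ) ≤ (f j : ℝ) := Nat.cast_nonneg _
  have hg : (0:ℝ) ≤ (g j : ℝ) := Nat.cast_nonneg _
  nlinarith

lemma aux_pairing_nonneg (β : V) (hβ : β ∈ S.R0)
    (hhigh : ∀ γ ∈ S.R0, ⟪γ, γ⟫ = ⟪β, β⟫ →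
      ∃ f : Fin S.n → ℕ, β - γ = ∑ j, (f j : ℝ) • S.simple j)
    {α : V} (hα : α ∈ S.Rpos) : 0 ≤ ⟪β, coroot α⟫ := by
  by_contra hneg
  push_neg at hneg
  have hα0 := S.pos_subset hα
  obtain ⟨k, hk⟩ := S.cryst α hα0 β hβ
  have hk0 : (k : ℝ) < 0 := by rwa [hk] at hneg
  have hq := aux_inner_self_pos S hα0
  have hq' : ⟪α, α⟫ ≠ 0 := ne_of_gt hq
  have h2 : 2 * ⟪β, α⟫ = (k:ℝ) * ⟪α, α⟫ := by
    rw [aux_inner_coroot] at hk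
    field_simp at hk
    linarith
  have hγ : β - (k:ℝ) • α ∈ S.R0 := by
    have h3 := S.refl_mem α hα0 β hβ
    rwa [hk] at h3
  have hnorm : ⟪β - (k:ℝ) • α, β - (k:ℝ) • α⟫ = ⟪β, β⟫ := by
    have e1 : ⟪β - (k:ℝ) • α, β - (k:ℝ) • α⟫
        = ⟪β, β⟫ - 2 * ((k:ℝ) * ⟪β, α⟫) + (k:ℝ)^2 * ⟪α, α⟫ := by
      rw [real_inner_sub_sub_self, real_inner_smul_right, real_inner_smul_left,
        real_inner_smul_right]
      ring
    rw [e1]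
    linear_combination (-(k:ℝ)) * h2
  obtain ⟨f, hf⟩ := hhigh _ hγ hnorm
  obtain ⟨g, hg⟩ := S.pos_decomp α hα
  have hf' : (k:ℝ) • ∑ j, (g j:ℝ) • S.simple j = ∑ j, (f j:ℝ) • S.simple j := by
    rw [← hg, ← hf]
    abel
  have hz := aux_coeff S hk0 g f hf'
  have hzero : α = 0 := by
    rw [hg]
    exact Finset.sum_eq_zero fun j _ => by rw [hz j, zero_smul]
  exact aux_root_ne_zero S hα0 hzero

/-- The reflection in a root, as a linear map. -/
def rmapL (γ : V) : V →ₗ[ℝ] V where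
  toFun x := x - ⟪x, coroot γ⟫ • γ
  map_add' x y := by
    show (x + y) - ⟪x + y, coroot γ⟫ • γ = (x - ⟪x, coroot γ⟫ • γ) + (y - ⟪y, coroot γ⟫ • γ)
    rw [inner_add_left, add_smul]
    abel
  map_smul' r x := by
    simp only [real_inner_smul_left, RingHom.id_apply, smul_sub, mul_smul]

lemma rmapL_apply (γ x : V) : rmapL γ x = x - ⟪x, coroot γ⟫ • γ := rfl

lemma rmapL_invol (γ x : V) : rmapL γ (rmapL γ x) = x := by
  have h := refl_involutive γ 0 x
  simpa [rmapL_apply] using h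

lemma rmapL_selfadj (γ x y : V) : ⟪rmapL γ x, y⟫ = ⟪x, rmapL γ y⟫ := by
  simp only [rmapL_apply, inner_sub_left, inner_sub_right, real_inner_smul_left,
    real_inner_smul_right, aux_inner_coroot]
  rw [real_inner_comm γ y]
  ring

lemma rmapL_norm (γ x : V) : ⟪rmapL γ x, rmapL γ x⟫ = ⟪x, x⟫ := by
  rw [rmapL_selfadj, rmapL_invol]

lemma rmapL_mem {γ α : V} (hγ : γ ∈ S.R0) (hα : α ∈ S.R0) : rmapL γ α ∈ S.R0 := by
  have h := S.refl_mem γ hγ α hα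
  rwa [← rmapL_apply] at h

lemma aux_invariant_top (U : Submodule ℝ V) (hU : U ≠ ⊥)
    (hinv : ∀ γ ∈ S.R0, ∀ x ∈ U, rmapL γ x ∈ U) : U = ⊤ := by
  have hsub : ∀ γ ∈ S.R0, γ ∉ U → ∀ x ∈ U, ⟪γ, x⟫ = 0 := by
    intro γ hγ hγU x hx
    by_contra hne
    have hq := aux_inner_self_pos S hγ
    have hxγ : ⟪x, γ⟫ ≠ 0 := fun h => hne (by rw [real_inner_comm]; exact h)
    have hxc : ⟪x, coroot γ⟫ ≠ 0 := by
      rw [aux_inner_coroot]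
      exact mul_ne_zero (by positivity) hxγ
    have hmem : ⟪x, coroot γ⟫ • γ ∈ U := by
      have h1 := hinv γ hγ x hx
      have h2 : x - rmapL γ x ∈ U := U.sub_mem hx h1
      rwa [rmapL_apply, sub_sub_cancel] at h2
    have hγmem : γ ∈ U := by
      have h3 := U.smul_mem (⟪x, coroot γ⟫)⁻¹ hmem
      rwa [smul_smul, inv_mul_cancel₀ hxc, one_smul] at h3
    exact hγU hγmem
  by_cases hall : ∀ γ ∈ S.R0, γ ∈ U
  · rw [eq_top_iff, ← S.span_top]
    exact Submodule.span_le.mpr fun γ hγ => hall γ (Finset.mem_coe.mp hγ)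
  · push_neg at hall
    obtain ⟨γ0, hγ0, hγ0U⟩ := hall
    exfalso
    by_cases hA : ∃ δ ∈ S.R0, δ ∈ U
    · obtain ⟨δ, hδ, hδU⟩ := hA
      apply S.irred
      refine ⟨{x | x ∈ S.R0 ∧ x ∈ U}, {x | x ∈ S.R0 ∧ x ∉ U},
        ⟨δ, hδ, hδU⟩, ⟨γ0, hγ0, hγ0U⟩, ?_, ?_⟩
      · ext x
        simp only [Set.mem_union, Set.mem_setOf_eq, Finset.mem_coe]
        constructor
        · rintro (⟨h, _⟩ | ⟨h, _⟩) <;> exact h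
        · intro h
          by_cases hx : x ∈ U
          · exact Or.inl ⟨h, hx⟩
          · exact Or.inr ⟨h, hx⟩
      · rintro a ⟨haR, haU⟩ b ⟨hbR, hbU⟩
        rw [real_inner_comm]
        exact hsub b hbR hbU a haU
    · push_neg at hA
      obtain ⟨x, hx, hx0⟩ := Submodule.exists_mem_ne_zero_of_ne_bot hU
      have hle : Submodule.span ℝ (S.R0 : Set V) ≤ (ℝ ∙ x)ᗮ := by
        refine Submodule.span_le.mpr fun γ hγ => ?_
        rw [SetLike.mem_coe, Submodule.mem_orthogonal_singleton_iff_inner_left]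
        exact hsub γ (Finset.mem_coe.mp hγ) (hA γ (Finset.mem_coe.mp hγ)) x hx
      rw [S.span_top] at hle
      have hxs : x ∈ (ℝ ∙ x)ᗮ := hle Submodule.mem_top
      have hxx := Submodule.mem_orthogonal_singleton_iff_inner_left.mp hxs
      exact hx0 (inner_self_eq_zero.mp hxx)

/-- The operator `A x = ∑_{α ∈ R₀⁺} ⟨x,α⟩ α̂`. -/
noncomputable def opA : V →ₗ[ℝ] V where
  toFun x := ∑ α ∈ S.Rpos, ⟪x, α⟫ • S.hat α
  map_add' x y := by simp [inner_add_left, add_smul, Finset.sum_add_distrib]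
  map_smul' r x := by simp [real_inner_smul_left, mul_smul, Finset.smul_sum]

lemma opA_apply (x : V) : opA S x = ∑ α ∈ S.Rpos, ⟪x, α⟫ • S.hat α := rfl

variable {u : V → ℝ}

lemma aux_sum_R0 (hu : ∀ α, S.hat α = u α • α)
    (huinv : ∀ a b : V, ⟪a, a⟫ = ⟪b, b⟫ → u a = u b) (x : V) :
    ∑ α ∈ S.R0, (u α * ⟪x, α⟫) • α = (2:ℝ) • opA S x := by
  have hneg : ∑ α ∈ S.R0 \ S.Rpos, (u α * ⟪x, α⟫) • α
      = ∑ α ∈ S.Rpos, (u α * ⟪x, α⟫) • α := by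
    refine Finset.sum_nbij' (fun α => -α) (fun α => -α) ?_ ?_ ?_ ?_ ?_
    · intro a ha
      rw [Finset.mem_sdiff] at ha
      exact aux_neg_pos S ha.1 ha.2
    · intro a ha
      rw [Finset.mem_sdiff]
      exact ⟨aux_neg_mem S (S.pos_subset ha), (S.pos_partition a (S.pos_subset ha)).mp ha⟩
    · intro a _; exact neg_neg a
    · intro a _; exact neg_neg a
    · intro a _
      have hua : u (-a) = u a := huinv _ _ (by simp)
      rw [hua, inner_neg_right]
      simp [mul_neg, neg_smul, smul_neg]
  have hsplit := Finset.sum_sdiff (f := fun α => (u α * ⟪x, α⟫) • α) S.pos_subset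
  have hop : opA S x = ∑ α ∈ S.Rpos, (u α * ⟪x, α⟫) • α := by
    rw [opA_apply]
    refine Finset.sum_congr rfl fun α _ => ?_
    rw [hu α, smul_smul, mul_comm]
  rw [hop, ← hsplit, hneg, two_smul]

lemma aux_opA_comm (hu : ∀ α, S.hat α = u α • α)
    (huinv : ∀ a b : V, ⟪a, a⟫ = ⟪b, b⟫ → u a = u b)
    {γ : V} (hγ : γ ∈ S.R0) (x : V) :
    opA S (rmapL γ x) = rmapL γ (opA S x) := by
  have key : ∑ α ∈ S.R0, (u α * ⟪rmapL γ x, α⟫) • α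
      = rmapL γ (∑ α ∈ S.R0, (u α * ⟪x, α⟫) • α) := by
    rw [map_sum]
    refine Finset.sum_nbij' (fun α => rmapL γ α) (fun α => rmapL γ α) ?_ ?_ ?_ ?_ ?_
    · intro a ha; exact rmapL_mem S hγ ha
    · intro a ha; exact rmapL_mem S hγ ha
    · intro a _; exact rmapL_invol γ a
    · intro a _; exact rmapL_invol γ a
    · intro a _
      rw [map_smul]
      have h1 : u (rmapL γ a) = u a := huinv _ _ (by rw [rmapL_norm])
      rw [h1, rmapL_invol, rmapL_selfadj]
  have h2 := aux_sum_R0 S hu huinv (rmapL γ x)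
  have h3 := aux_sum_R0 S hu huinv x
  rw [h2, h3, map_smul] at key
  exact smul_right_injective V two_ne_zero key

lemma aux_opA_symm (hu : ∀ α, S.hat α = u α • α) : (opA S).IsSymmetric := by
  intro x y
  rw [opA_apply, opA_apply, sum_inner, inner_sum]
  refine Finset.sum_congr rfl fun α _ => ?_
  rw [hu α, real_inner_smul_left, real_inner_smul_left, real_inner_smul_right,
    real_inner_smul_right, real_inner_comm α y]
  ring

lemma aux_opA_smul (hu : ∀ α, S.hat α = u α • α)
    (huinv : ∀ a b : V, ⟪a, a⟫ = ⟪b, b⟫ → u a = u b) :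
    ∃ κ : ℝ, ∀ x : V, opA S x = κ • x := by
  have hnt : Nontrivial V :=
    Module.nontrivial_of_finrank_pos (R := ℝ) (by rw [S.hdim]; exact S.npos)
  have hsym := aux_opA_symm S hu
  obtain ⟨κ, heig⟩ : ∃ κ : ℝ, Module.End.HasEigenvalue (opA S) κ :=
    ⟨_, hsym.hasEigenvalue_iSup_of_finiteDimensional⟩
  refine ⟨κ, fun x => ?_⟩
  have htop : Module.End.eigenspace (opA S) κ = ⊤ := by
    refine aux_invariant_top S _ heig ?_
    intro γ hγ y hy
    rw [Module.End.mem_eigenspace_iff] at hy ⊢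
    rw [aux_opA_comm S hu huinv hγ, hy, map_smul]
  have hx : x ∈ Module.End.eigenspace (opA S) κ := htop ▸ Submodule.mem_top
  exact Module.End.mem_eigenspace_iff.mp hx

lemma aux_master (μ : V) (u : V → ℝ) (β : V)
    (hu : ∀ α, S.hat α = u α • α)
    (huinv : ∀ a b : V, ⟪a, a⟫ = ⟪b, b⟫ → u a = u b)
    (hupos : ∀ α ∈ S.R0, 0 < u α)
    (hβpos : β ∈ S.Rpos)
    (ha0 : S.a0 = -β)
    (hkey : ∀ α ∈ S.Rpos, u α * ⟪β, α⟫^2 = ⟪β, α⟫ + (if α = β then ⟪β, β⟫ else 0))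
    (ht0 : ∀ α ∈ S.R0, S.t α = 0) :
    IsMinOn (S.Morse μ) Set.univ
      ((2 * Real.pi / ((1 - ⟪S.rho, coroot S.a0⟫) + (S.c : ℝ))) • (S.rhoHat + μ)) ∧
    ∀ ξ : V, IsMinOn (S.Morse μ) Set.univ ξ →
      ξ = (2 * Real.pi / ((1 - ⟪S.rho, coroot S.a0⟫) + (S.c : ℝ))) • (S.rhoHat + μ) := by
  have hβ0 : β ∈ S.R0 := S.pos_subset hβpos
  have hq : 0 < ⟪β, β⟫ := aux_inner_self_pos S hβ0
  have hq' : ⟪β, β⟫ ≠ 0 := ne_of_gt hq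
  obtain ⟨κ, hκ⟩ := aux_opA_smul S hu huinv
  have hsum : ∀ ξ : V, ∑ α ∈ S.Rpos, u α * ⟪ξ, α⟫^2 = κ * ⟪ξ, ξ⟫ := by
    intro ξ
    have h1 : ⟪opA S ξ, ξ⟫ = κ * ⟪ξ, ξ⟫ := by rw [hκ, real_inner_smul_left]
    rw [← h1, opA_apply, sum_inner]
    refine Finset.sum_congr rfl fun α _ => ?_
    rw [hu α, real_inner_smul_left, real_inner_smul_left, real_inner_comm α ξ]
    ring
  have hκval : (1 - ⟪S.rho, coroot S.a0⟫) = κ := by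
    have h1 : κ * ⟪β, β⟫ = ∑ α ∈ S.Rpos, u α * ⟪β, α⟫^2 := (hsum β).symm
    have h2 : ∑ α ∈ S.Rpos, u α * ⟪β, α⟫^2
        = (∑ α ∈ S.Rpos, ⟪β, α⟫) + ⟪β, β⟫ := by
      rw [Finset.sum_congr rfl hkey, Finset.sum_add_distrib]
      congr 1
      rw [Finset.sum_ite_eq' S.Rpos β fun _ => ⟪β, β⟫, if_pos hβpos]
    have h3 : ∑ α ∈ S.Rpos, ⟪β, α⟫ = 2 * ⟪S.rho, β⟫ := by
      have e1 : ⟪S.rho, β⟫ = 2⁻¹ * ∑ α ∈ S.Rpos, ⟪α, β⟫ := by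
        unfold Setup.rho
        rw [real_inner_smul_left, sum_inner]
      rw [e1, Finset.sum_congr rfl fun α _ => real_inner_comm β α]
      ring
    have hcomb : κ * ⟪β, β⟫ = 2 * ⟪S.rho, β⟫ + ⟪β, β⟫ := by rw [h1, h2, h3]
    have h4 : coroot S.a0 = -coroot β := by rw [ha0, aux_coroot_neg]
    rw [h4, inner_neg_right, aux_inner_coroot]
    field_simp
    linear_combination -hcomb
  have hκ0 : 0 ≤ κ := by
    have h1 := hsum β
    have h2 : 0 ≤ ∑ α ∈ S.Rpos, u α * ⟪β, α⟫^2 :=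
      Finset.sum_nonneg fun α hα =>
        mul_nonneg (le_of_lt (hupos α (S.pos_subset hα))) (sq_nonneg _)
    nlinarith
  set K := (1 - ⟪S.rho, coroot S.a0⟫) + (S.c : ℝ) with hKdef
  have hc1 : (1:ℝ) < (S.c:ℝ) := by exact_mod_cast S.c_gt
  have hKκ : K = κ + (S.c:ℝ) := by rw [hKdef, hκval]
  have hKpos : 0 < K := by rw [hKκ]; linarith
  have hmorse : ∀ ξ : V, S.Morse μ ξ
      = K/2 * ⟪ξ, ξ⟫ - 2 * Real.pi * ⟪S.rhoHat + μ, ξ⟫ := by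
    intro ξ
    have hterm : ∀ α ∈ S.Rpos,
        (2 / ⟪α, coroot (S.hat α)⟫) * ∫ x in (0:ℝ)..(⟪ξ, α⟫), vintOf S.t α x
        = u α * ⟪ξ, α⟫^2 / 2 := by
      intro α hα
      have hα0 := S.pos_subset hα
      have hqα := aux_inner_self_pos S hα0
      have hqα' : ⟪α, α⟫ ≠ 0 := ne_of_gt hqα
      have huα : u α ≠ 0 := ne_of_gt (hupos α hα0)
      have hcoef : 2 / ⟪α, coroot (S.hat α)⟫ = u α := by
        rw [hu α]
        have e1 : ⟪α, coroot ((u α) • α)⟫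
            = 2 / (u α * (u α * ⟪α, α⟫)) * (u α * ⟪α, α⟫) := by
          simp only [coroot, real_inner_smul_left, real_inner_smul_right]
        rw [e1]
        field_simp
      have hv : ∀ x : ℝ, vintOf S.t α x = x := by
        intro x
        unfold vintOf
        rw [ht0 α hα0]
        norm_num [integral_one]
      rw [hcoef]
      simp only [hv]
      rw [integral_id]
      ring
    show S.MorseOf S.t μ ξ = _
    unfold Setup.MorseOf
    rw [Finset.sum_congr rfl hterm]
    have h6 : ∑ α ∈ S.Rpos, u α * ⟪ξ, α⟫^2 / 2 = κ/2 * ⟪ξ, ξ⟫ := by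
      rw [← Finset.sum_div, hsum ξ]
      ring
    rw [h6, hKκ]
    ring
  set b := S.rhoHat + μ with hbdef
  set ξs := (2 * Real.pi / K) • b with hξsdef
  have hKξ : ∀ ξ : V, K * ⟪ξs, ξ⟫ = 2 * Real.pi * ⟪b, ξ⟫ := by
    intro ξ
    rw [hξsdef, real_inner_smul_left]
    field_simp
  have hdiff : ∀ ξ : V, S.Morse μ ξ - S.Morse μ ξs = K/2 * ⟪ξ - ξs, ξ - ξs⟫ := by
    intro ξ
    rw [hmorse ξ, hmorse ξs, real_inner_sub_sub_self]
    have h1 := hKξ ξ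
    have h2 := hKξ ξs
    have h3 : ⟪ξ, ξs⟫ = ⟪ξs, ξ⟫ := real_inner_comm _ _
    linear_combination h1 - h2 + K * h3
  constructor
  · rw [isMinOn_iff]
    intro x _
    have h1 := hdiff x
    nlinarith [real_inner_self_nonneg (x := x - ξs), hKpos]
  · intro ξ hmin
    have h1 : S.Morse μ ξ ≤ S.Morse μ ξs := isMinOn_iff.mp hmin ξs (Set.mem_univ _)
    have h2 := hdiff ξ
    have h3 : ⟪ξ - ξs, ξ - ξs⟫ ≤ 0 := by nlinarith [hKpos]
    have h4 : ξ - ξs = 0 :=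
      inner_self_eq_zero.mp (le_antisymm h3 (real_inner_self_nonneg (x := ξ - ξs)))
    exact sub_eq_zero.mp h4

end Statement1Aux


/-- at `t = 0` the unique global minimizer of `𝒱_μ` equals
`ξ_μ(0) = (2π/(h+c))(ρ̂ + μ)` with `h = 1 - ⟨ρ, α₀^∨⟩`. -/
theorem statement1 (S : Setup V) (ht0 : ∀ α ∈ S.R0, S.t α = 0)
    (μ : V) (hμ : μ ∈ S.Phat) :
    IsMinOn (S.Morse μ) Set.univ
      ((2 * Real.pi / ((1 - ⟪S.rho, coroot S.a0⟫) + (S.c : ℝ))) • (S.rhoHat + μ)) ∧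
    ∀ ξ : V, IsMinOn (S.Morse μ) Set.univ ξ →
      ξ = (2 * Real.pi / ((1 - ⟪S.rho, coroot S.a0⟫) + (S.c : ℝ))) • (S.rhoHat + μ) := by
  rcases S.admissible with ⟨hhat, ha0⟩ | ⟨hhat, ha0⟩
  · -- the case `R̂₀ = R₀^∨`
    have hβpos : S.hs ∈ S.Rpos := S.hs_mem
    have hβ0 : S.hs ∈ S.R0 := S.pos_subset hβpos
    have hqβ := aux_inner_self_pos S hβ0
    have hqβ' : ⟪S.hs, S.hs⟫ ≠ 0 := ne_of_gt hqβ
    refine aux_master S μ (fun α => 2 / ⟪α, α⟫) S.hs ?_ ?_ ?_ hβpos ha0 ?_ ht0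
    · intro α
      rw [hhat α]
      rfl
    · intro a b h
      simp only [h]
    · intro α hα
      have := aux_inner_self_pos S hα
      positivity
    · intro α hα
      have hα0 := S.pos_subset hα
      have hqα := aux_inner_self_pos S hα0
      have hqα' : ⟪α, α⟫ ≠ 0 := ne_of_gt hqα
      by_cases he : α = S.hs
      · subst he
        rw [if_pos rfl]
        show 2 / ⟪S.hs, S.hs⟫ * ⟪S.hs, S.hs⟫ ^ 2 = ⟪S.hs, S.hs⟫ + ⟪S.hs, S.hs⟫
        field_simp
        ring
      · rw [if_neg he]
        show 2 / ⟪α, α⟫ * ⟪S.hs, α⟫ ^ 2 = ⟪S.hs, α⟫ + 0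
        rw [add_zero]
        obtain ⟨k, hk⟩ := S.cryst α hα0 S.hs hβ0
        have hk0 : 0 ≤ (k:ℝ) := by
          rw [← hk]
          exact aux_pairing_nonneg S S.hs hβ0 (fun γ hγ hn => S.hs_highest γ hγ hn) hα
        have h2 : 2 * ⟪S.hs, α⟫ = (k:ℝ) * ⟪α, α⟫ := by
          rw [aux_inner_coroot] at hk
          field_simp at hk
          linarith
        have hk2 : (k:ℝ) < 2 := by
          by_contra hge
          push_neg at hge
          have hshort : ⟪S.hs, S.hs⟫ ≤ ⟪α, α⟫ := S.hs_short α hα0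
          have hsub : ⟪S.hs - α, S.hs - α⟫ ≤ 0 := by
            rw [real_inner_sub_sub_self]
            nlinarith
          have h6 : S.hs - α = 0 :=
            inner_self_eq_zero.mp
              (le_antisymm hsub (real_inner_self_nonneg (x := S.hs - α)))
          exact he (sub_eq_zero.mp h6).symm
        have hk01 : k = 0 ∨ k = 1 := by
          have hk0' : 0 ≤ k := by exact_mod_cast hk0
          have hk2' : k < 2 := by exact_mod_cast hk2
          omega
        rcases hk01 with h | h
        · rw [h] at h2
          push_cast at h2
          have hz : ⟪S.hs, α⟫ = 0 := by linarith
          rw [hz]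
          ring
        · rw [h] at h2
          push_cast at h2
          field_simp
          linear_combination ⟪S.hs, α⟫ * h2
  · -- the case `R̂₀ = u_φ R₀`
    have hβpos : S.hroot ∈ S.Rpos := S.hroot_mem
    have hβ0 : S.hroot ∈ S.R0 := S.pos_subset hβpos
    have hqβ := aux_inner_self_pos S hβ0
    have hqβ' : ⟪S.hroot, S.hroot⟫ ≠ 0 := ne_of_gt hqβ
    refine aux_master S μ (fun _ => 2 / ⟪S.hroot, S.hroot⟫) S.hroot ?_ ?_ ?_ hβpos ha0 ?_ ht0
    · intro α
      exact hhat α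
    · intro a b _
      rfl
    · intro α _
      positivity
    · intro α hα
      have hα0 := S.pos_subset hα
      have hqα := aux_inner_self_pos S hα0
      have hqα' : ⟪α, α⟫ ≠ 0 := ne_of_gt hqα
      by_cases he : α = S.hroot
      · subst he
        rw [if_pos rfl]
        show 2 / ⟪S.hroot, S.hroot⟫ * ⟪S.hroot, S.hroot⟫ ^ 2
            = ⟪S.hroot, S.hroot⟫ + ⟪S.hroot, S.hroot⟫
        field_simp
        ring
      · rw [if_neg he]
        show 2 / ⟪S.hroot, S.hroot⟫ * ⟪S.hroot, α⟫ ^ 2 = ⟪S.hroot, α⟫ + 0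
        rw [add_zero]
        have hcomm : ⟪α, S.hroot⟫ = ⟪S.hroot, α⟫ := real_inner_comm _ _
        obtain ⟨m, hm⟩ := S.cryst S.hroot hβ0 α hα0
        obtain ⟨k, hk⟩ := S.cryst α hα0 S.hroot hβ0
        have hk0 : 0 ≤ (k:ℝ) := by
          rw [← hk]
          exact aux_pairing_nonneg S S.hroot hβ0
            (fun γ hγ _ => S.hroot_highest γ hγ) hα
        have h2k : 2 * ⟪S.hroot, α⟫ = (k:ℝ) * ⟪α, α⟫ := by
          rw [aux_inner_coroot] at hk
          field_simp at hk
          linarith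
        have h2m : 2 * ⟪S.hroot, α⟫ = (m:ℝ) * ⟪S.hroot, S.hroot⟫ := by
          rw [aux_inner_coroot] at hm
          field_simp at hm
          linarith [hcomm]
        have hm01 : m = 0 ∨ m = 1 := by
          by_contra hcon
          have hm' : m ≤ -1 ∨ 2 ≤ m := by omega
          rcases hm' with hmneg | hm2
          · have hmneg' : (m:ℝ) ≤ -1 := by exact_mod_cast hmneg
            nlinarith [mul_nonneg hk0 (le_of_lt hqα)]
          · have hm2' : (2:ℝ) ≤ (m:ℝ) := by exact_mod_cast hm2
            have hba : ⟪S.hroot, S.hroot⟫ ≤ ⟪S.hroot, α⟫ := by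
              nlinarith [mul_le_mul_of_nonneg_right hm2' (le_of_lt hqβ)]
            have hk1 : 1 ≤ k := by
              by_contra hkle
              push_neg at hkle
              have hk00 : k = 0 := by
                have : (0:ℤ) ≤ k := by exact_mod_cast hk0
                omega
              rw [hk00] at h2k
              push_cast at h2k
              nlinarith
            by_cases hk2 : 2 ≤ k
            · have hk2' : (2:ℝ) ≤ (k:ℝ) := by exact_mod_cast hk2
              have hsub : ⟪S.hroot - α, S.hroot - α⟫ ≤ 0 := by
                rw [real_inner_sub_sub_self]
                nlinarith [mul_le_mul_of_nonneg_right hk2' (le_of_lt hqα),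
                  mul_le_mul_of_nonneg_right hm2' (le_of_lt hqβ)]
              have h6 : S.hroot - α = 0 :=
                inner_self_eq_zero.mp
                  (le_antisymm hsub (real_inner_self_nonneg (x := S.hroot - α)))
              exact he (sub_eq_zero.mp h6).symm
            · have hke : k = 1 := by omega
              rw [hke] at h2k
              push_cast at h2k
              have hγmem : S.hroot - α ∈ S.R0 := by
                have h7 := S.refl_mem α hα0 S.hroot hβ0
                rw [hk, hke] at h7
                push_cast at h7
                rwa [one_smul] at h7
              have hγnorm : ⟪S.hroot - α, S.hroot - α⟫ = ⟪S.hroot, S.hroot⟫ := by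
                rw [real_inner_sub_sub_self]
                linarith
              have hαγ : ⟪α, S.hroot - α⟫ = -⟪S.hroot, α⟫ := by
                rw [inner_sub_right]
                linarith [hcomm]
              have hicα : ⟪α, coroot (S.hroot - α)⟫ = -(m:ℝ) := by
                rw [aux_inner_coroot, hγnorm, hαγ]
                field_simp
                linarith [hcomm, h2m]
              have hδ : α - (-(m:ℝ)) • (S.hroot - α) ∈ S.R0 := by
                have h8 := S.refl_mem (S.hroot - α) hγmem α hα0
                rwa [hicα] at h8
              obtain ⟨f, hf⟩ := S.hroot_highest _ hδ
              obtain ⟨g, hg⟩ := S.hroot_highest α hα0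
              have hfe : ((1:ℝ) - (m:ℝ)) • ∑ j, (g j:ℝ) • S.simple j
                  = ∑ j, (f j:ℝ) • S.simple j := by
                rw [← hg, ← hf]
                module
              have hmlt : ((1:ℝ) - (m:ℝ)) < 0 := by linarith
              have hz := aux_coeff S hmlt g f hfe
              have hzero : S.hroot - α = 0 := by
                rw [hg]
                exact Finset.sum_eq_zero fun j _ => by rw [hz j, zero_smul]
              exact he (sub_eq_zero.mp hzero).symm
        rcases hm01 with h | h
        · rw [h] at h2m
          push_cast at h2m
          have hz : ⟪S.hroot, α⟫ = 0 := by linarith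
          rw [hz]
          ring
        · rw [h] at h2m
          push_cast at h2m
          field_simp
          linear_combination ⟪S.hroot, α⟫ * h2m


end AffinePieri
end
end
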